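/- The size-difference heuristic is a valid lower bound: if a partial matching M' between BDTs b_f and b_g leaves sets U and V of unmatched nodes with n = |U| - |V| > 0, then any full matching extending M' must delete at least n nodes of U, and hence its cost is at least the n-th smallest half-persistence among nodes of U. -/

import Mathlib

open scoped Classical

/-- A branch of a merge tree, encoded by its (saddle value, extremum value). -/
abbrev Branch := ℝ × ℝ

/-- Persistence of a branch. -/
noncomputable def pers (x : Branch) : ℝ := |x.2 - x.1|

/-- Cost of deleting (or inserting) a branch: half its persistence. -/
noncomputable def delCost (x : Branch) : ℝ := pers x / 2

/-- Relabel cost between branches: max coordinatewise difference of the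
saddle and extremum values. -/
noncomputable def relCost (x y : Branch) : ℝ := max |x.1 - y.1| |x.2 - y.2|

/-- Cost of a matched pair, where `none` plays the role of the empty node. -/
noncomputable def pairCost : Option Branch × Option Branch → ℝ
  | (some x, some y) => relCost x y
  | (some x, none) => delCost x
  | (none, some y) => delCost y
  | (none, none) => 0

/-- `M` is a matching between the branch sets `A` and `B`: every element of
`A` and of `B` appears in exactly one pair of `M`, pairs only involve
elements of `A`, `B` or the empty node, and `(λ, λ) ∉ M`. -/
def IsMatching (A B : Finset Branch)
    (M : Finset (Option Branch × Option Branch)) : Prop :=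
  (∀ a ∈ A, ∃! p, p ∈ M ∧ p.1 = some a) ∧
  (∀ b ∈ B, ∃! p, p ∈ M ∧ p.2 = some b) ∧
  (∀ p ∈ M, (∀ a, p.1 = some a → a ∈ A) ∧ (∀ b, p.2 = some b → b ∈ B)) ∧
  ((none, none) ∉ M)

/-- The cost of a matching: the largest cost of all its pairs. -/
noncomputable def matchingCost (M : Finset (Option Branch × Option Branch)) : ℝ :=
  M.fold max 0 pairCost

/-- The merge tree matching distance on branch sets: minimum matching cost. -/
noncomputable def dM (A B : Finset Branch) : ℝ :=
  sInf {c : ℝ | ∃ M, IsMatching A B M ∧ c = matchingCost M}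

/-- Persistence simplification: remove every branch of persistence `< ε`. -/
noncomputable def simplify (ε : ℝ) (A : Finset Branch) : Finset Branch :=
  A.filter (fun x => ε ≤ pers x)

/-- A partial matching: every element of `A` and of `B` appears in at most
one pair of `M`. -/
def IsPartialMatching (A B : Finset Branch)
    (M : Finset (Option Branch × Option Branch)) : Prop :=
  (∀ a ∈ A, ∀ p ∈ M, ∀ q ∈ M, p.1 = some a → q.1 = some a → p = q) ∧
  (∀ b ∈ B, ∀ p ∈ M, ∀ q ∈ M, p.2 = some b → q.2 = some b → p = q) ∧
  (∀ p ∈ M, (∀ a, p.1 = some a → a ∈ A) ∧ (∀ b, p.2 = some b → b ∈ B)) ∧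
  ((none, none) ∉ M)

/-- The `n`-th smallest element of a multiset of reals (1-indexed). -/
noncomputable def nthSmallest (s : Multiset ℝ) (n : ℕ) : ℝ :=
  (s.sort (· ≤ ·)).getD (n - 1) 0

/-!
The nodes of `U` that a full matching `M ⊇ M'` does not delete are matched to nodes of `b_g`
which, by uniqueness of partners in `M`, are unmatched in `M'`, i.e. lie in `V`. Again by
uniqueness this assignment is injective, so at most `|V|` nodes of `U` survive and at least
`|U| - |V|` are deleted. Each deletion costs at most the cost of `M`, so at least `n` entries of the
multiset of deletion costs on `U` are `≤ cost M`, which bounds its `n`-th smallest entry.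
-/

theorem List.Pairwise.countP_le_of_lt_getElem {α : Type*} [Preorder α] {l : List α}
    (hl : l.Pairwise (· ≤ ·)) {i : ℕ} (hi : i < l.length) {c : α} (hc : c < l[i]) :
    l.countP (· ≤ c) ≤ i := by
  induction l generalizing i with
  | nil => simp at hi
  | cons a t ih =>
    rw [List.pairwise_cons] at hl
    cases i with
    | zero =>
      have ha : c < a := hc
      simp only [nonpos_iff_eq_zero, List.countP_eq_zero, List.mem_cons, decide_eq_true_eq]
      rintro x (rfl | hx)
      · exact ha.not_ge
      · exact (ha.trans_le (hl.1 x hx)).not_ge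
    | succ j =>
      have := ih hl.2 (by simpa using hi) hc
      rw [List.countP_cons]
      split <;> omega

theorem nthSmallest_le_of_le_countP {s : Multiset ℝ} {n : ℕ} {c : ℝ} (hn : 1 ≤ n)
    (h : n ≤ s.countP (· ≤ c)) : nthSmallest s n ≤ c := by
  have hsorted := Multiset.pairwise_sort s (· ≤ ·)
  set l := s.sort (· ≤ ·)
  have hcount : s.countP (· ≤ c) = l.countP (fun x => decide (x ≤ c)) := by
    rw [← Multiset.sort_eq s (· ≤ ·)]
    rfl
  have hlen : n - 1 < l.length := by
    have := List.countP_le_length (l := l) (p := fun x => decide (x ≤ c))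
    omega
  rw [nthSmallest, List.getD_eq_getElem l 0 hlen]
  by_contra! hlt
  have := hsorted.countP_le_of_lt_getElem hlen hlt
  omega

theorem pairCost_le_matchingCost {M : Finset (Option Branch × Option Branch)}
    {p : Option Branch × Option Branch} (hp : p ∈ M) : pairCost p ≤ matchingCost M :=
  (Finset.le_fold_max _).2 (Or.inr ⟨p, hp, le_rfl⟩)

namespace IsMatching

variable {A B : Finset Branch} {M M' : Finset (Option Branch × Option Branch)}

theorem eq_of_snd_eq (hM : IsMatching A B M) {p q : Option Branch × Option Branch}
    (hp : p ∈ M) (hq : q ∈ M) {b : Branch} (hpb : p.2 = some b) (hqb : q.2 = some b) :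
    p = q :=
  (hM.2.1 b ((hM.2.2.1 p hp).2 b hpb)).unique ⟨hp, hpb⟩ ⟨hq, hqb⟩

theorem exists_mem_of_not_deleted (hM : IsMatching A B M) {a : Branch} (ha : a ∈ A)
    (hdel : (some a, none) ∉ M) : ∃ b, (some a, some b) ∈ M := by
  obtain ⟨⟨x, y⟩, ⟨hp, rfl⟩, -⟩ := hM.1 a ha
  cases y with
  | none => exact absurd hp hdel
  | some b => exact ⟨b, hp⟩

theorem snd_unmatched_of_fst_unmatched (hM : IsMatching A B M) (hext : M' ⊆ M)
    {a b : Branch} (hab : (some a, some b) ∈ M) (ha : ∀ p ∈ M', p.1 ≠ some a) :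
    ∀ p ∈ M', p.2 ≠ some b := fun p hp hpb =>
  ha p hp (by rw [hM.eq_of_snd_eq (hext hp) hab hpb rfl])

theorem card_le_card_deleted_add_card_unmatched (hM : IsMatching A B M) (hext : M' ⊆ M)
    {U : Finset Branch} (hU : ∀ u ∈ U, u ∈ A ∧ ∀ p ∈ M', p.1 ≠ some u) :
    U.card ≤ (U.filter (fun u => (some u, none) ∈ M)).card +
      (B.filter (fun b => ∀ p ∈ M', p.2 ≠ some b)).card := by
  rw [← Finset.card_filter_add_card_filter_not (s := U) (fun u => (some u, none) ∈ M)]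
  refine Nat.add_le_add_left ?_ _
  refine Finset.card_le_card_of_forall_subsingleton (fun u b => (some u, some b) ∈ M) ?_ ?_
  · intro u hu
    obtain ⟨huU, hdel⟩ := Finset.mem_filter.1 hu
    obtain ⟨b, hb⟩ := hM.exists_mem_of_not_deleted (hU u huU).1 hdel
    exact ⟨b, Finset.mem_filter.2 ⟨(hM.2.2.1 _ hb).2 b rfl,
      hM.snd_unmatched_of_fst_unmatched hext hb (hU u huU).2⟩, hb⟩
  · rintro b - u₁ ⟨-, h₁⟩ u₂ ⟨-, h₂⟩
    exact Option.some_injective _ (congrArg Prod.fst (hM.eq_of_snd_eq h₁ h₂ rfl rfl))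

end IsMatching

theorem sizeDifference_heuristic_general (bf bg : Finset Branch)
    (M' : Finset (Option Branch × Option Branch))
    (U V : Finset Branch)
    (hU : U = bf.filter (fun a => ∀ p ∈ M', p.1 ≠ some a))
    (hV : V = bg.filter (fun b => ∀ p ∈ M', p.2 ≠ some b))
    (n : ℕ) (hn : n = U.card - V.card) (hpos : V.card < U.card)
    (M : Finset (Option Branch × Option Branch))
    (hM : IsMatching bf bg M) (hext : M' ⊆ M) :
    n ≤ (U.filter (fun u => (some u, (none : Option Branch)) ∈ M)).card ∧
      nthSmallest (U.val.map delCost) n ≤ matchingCost M := by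
  have hcard : n ≤ (U.filter (fun u => (some u, (none : Option Branch)) ∈ M)).card := by
    have := hM.card_le_card_deleted_add_card_unmatched hext (U := U)
      (fun u hu => Finset.mem_filter.1 (hU ▸ hu))
    rw [← hV] at this
    omega
  refine ⟨hcard, nthSmallest_le_of_le_countP (by omega) ?_⟩
  rw [Multiset.countP_map]
  calc n ≤ _ := hcard
    _ ≤ _ := Multiset.card_le_card <| Multiset.monotone_filter_right _
      fun u hu => pairCost_le_matchingCost (p := (some u, none)) hu

/-- **Validity of the size-difference heuristic.** If a partial matching `M'`
between BDTs `bf` and `bg` leaves sets `U ⊆ bf` and `V ⊆ bg` of unmatched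
nodes with `n = |U| - |V| > 0`, then every full matching `M` extending `M'`
deletes at least `n` nodes of `U`, and its cost is at least the `n`-th
smallest half-persistence (deletion cost) among the nodes of `U`. -/
theorem sizeDifference_heuristic (bf bg : Finset Branch)
    (M' : Finset (Option Branch × Option Branch))
    (hM' : IsPartialMatching bf bg M')
    (U V : Finset Branch)
    (hU : U = bf.filter (fun a => ∀ p ∈ M', p.1 ≠ some a))
    (hV : V = bg.filter (fun b => ∀ p ∈ M', p.2 ≠ some b))
    (n : ℕ) (hn : n = U.card - V.card) (hpos : V.card < U.card)
    (M : Finset (Option Branch × Option Branch))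
    (hM : IsMatching bf bg M) (hext : M' ⊆ M) :
    n ≤ (U.filter (fun u => (some u, (none : Option Branch)) ∈ M)).card ∧
      nthSmallest (U.val.map delCost) n ≤ matchingCost M :=
  sizeDifference_heuristic_general bf bg M' U V hU hV n hn hpos M hM hext
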